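/- Let K_6 be the 6×6 pentadiagonal 2-Toeplitz matrix. Its eigenvalues are a_1 − √(2b_1c_1), a_2 − √(2b_2c_2), a_1, a_2, a_1 + √(2b_1c_1), a_2 + √(2b_2c_2); in particular the characteristic polynomial of K_6 equals (x−a_1)·(x−a_2)·((x−a_1)²−2b_1c_1)·((x−a_2)²−2b_2c_2). -/

import Mathlib

/-!
Splitting the indices by parity decouples `K_{2m}`: the entries linking indices `i, j` vanish
unless `i ≡ j mod 2`, and on the even (resp. odd) indices `K_{2m}` restricts to the
tridiagonal Toeplitz matrix `T_m(a₁, b₁, c₁)` (resp. `T_m(a₂, b₂, c₂)`). Hence `K_{2m}` is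
permutation-similar to a block-diagonal matrix, its characteristic polynomial is the product of
those of the two blocks, and for `m = 3` each block contributes `(x - a) ((x - a)² - 2bc)`,
with roots `a` and `a ± √(2bc)`.
-/

open Polynomial Matrix

noncomputable def pentaK (n : ℕ) (a1 a2 b1 b2 c1 c2 : ℂ) : Matrix (Fin n) (Fin n) ℂ :=
  Matrix.of fun i j =>
    if i.val = j.val then (if i.val % 2 = 0 then a1 else a2)
    else if j.val = i.val + 2 then (if i.val % 2 = 0 then b1 else b2)
    else if i.val = j.val + 2 then (if j.val % 2 = 0 then c1 else c2)
    else 0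

namespace Matrix

variable {R n o : Type*} [CommRing R] [Fintype n] [DecidableEq n] [Fintype o] [DecidableEq o]

theorem charmatrix_blockDiagonal (M : o → Matrix n n R) :
    charmatrix (blockDiagonal M) = blockDiagonal fun k => charmatrix (M k) := by
  ext ⟨i, k⟩ ⟨j, k'⟩ : 2
  simp only [charmatrix_apply, blockDiagonal_apply, diagonal_apply, Prod.ext_iff]
  split_ifs <;> simp_all

theorem charpoly_blockDiagonal (M : o → Matrix n n R) :
    (blockDiagonal M).charpoly = ∏ k, (M k).charpoly := by
  rw [charpoly, charmatrix_blockDiagonal, det_blockDiagonal]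
  rfl

end Matrix

def tridiagToeplitz {R : Type*} [Zero R] (m : ℕ) (a b c : R) : Matrix (Fin m) (Fin m) R :=
  Matrix.of fun i j =>
    if i.val = j.val then a
    else if j.val = i.val + 1 then b
    else if i.val = j.val + 1 then c
    else 0

theorem charpoly_tridiagToeplitz_three {R : Type*} [CommRing R] (a b c : R) :
    (tridiagToeplitz 3 a b c).charpoly = (X - C a) * ((X - C a) ^ 2 - C (2 * b * c)) := by
  rw [charpoly, det_fin_three]
  simp only [charmatrix_apply, tridiagToeplitz, of_apply, diagonal_apply, Fin.ext_iff,
    Fin.val_zero, Fin.val_one, Fin.val_two, Nat.reduceEqDiff, Nat.reduceAdd, reduceIte, map_zero,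
    map_mul, map_ofNat]
  ring

theorem isRoot_charpoly_tridiagToeplitz_three {R : Type*} [CommRing R] {a b c s μ : R}
    (hs : s ^ 2 = 2 * b * c)
    (hμ : μ = a - s ∨ μ = a ∨ μ = a + s) : (tridiagToeplitz 3 a b c).charpoly.IsRoot μ := by
  rw [charpoly_tridiagToeplitz_three, IsRoot.def]
  simp only [eval_mul, eval_sub, eval_pow, eval_X, eval_C]
  rcases hμ with rfl | rfl | rfl
  · linear_combination (-s) * hs
  · ring
  · linear_combination s * hs

/-- `finProdFinEquiv (p, k) = 2 p + k`, so the block `k` collects the indices of parity `k`. -/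
theorem pentaK_submatrix_finProdFinEquiv (m : ℕ) (a1 a2 b1 b2 c1 c2 : ℂ) :
    (pentaK (m * 2) a1 a2 b1 b2 c1 c2).submatrix finProdFinEquiv finProdFinEquiv =
      blockDiagonal fun k => tridiagToeplitz m (![a1, a2] k) (![b1, b2] k) (![c1, c2] k) := by
  ext ⟨p, k⟩ ⟨q, k'⟩
  simp only [submatrix_apply, pentaK, of_apply, finProdFinEquiv_apply_val, blockDiagonal_apply,
    tridiagToeplitz, Nat.add_mul_mod_self_left]
  fin_cases k <;> fin_cases k' <;>
    simp only [Fin.zero_eta, Fin.mk_one, cons_val_zero, cons_val_one, cons_val_fin_one,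
      Nat.reduceMod, reduceIte, zero_ne_one, one_ne_zero] <;>
    split_ifs <;> first | rfl | omega

theorem charpoly_pentaK (m : ℕ) (a1 a2 b1 b2 c1 c2 : ℂ) :
    (pentaK (m * 2) a1 a2 b1 b2 c1 c2).charpoly =
      (tridiagToeplitz m a1 b1 c1).charpoly * (tridiagToeplitz m a2 b2 c2).charpoly := by
  rw [← charpoly_reindex finProdFinEquiv.symm, reindex_apply, Equiv.symm_symm,
    pentaK_submatrix_finProdFinEquiv, charpoly_blockDiagonal, Fin.prod_univ_two]
  rfl

theorem hasEigenvalue_pentaK {m : ℕ} {a1 a2 b1 b2 c1 c2 μ : ℂ}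
    (hμ : (tridiagToeplitz m a1 b1 c1).charpoly.IsRoot μ ∨
      (tridiagToeplitz m a2 b2 c2).charpoly.IsRoot μ) :
    Module.End.HasEigenvalue (toLin' (pentaK (m * 2) a1 a2 b1 b2 c1 c2)) μ := by
  rwa [Module.End.hasEigenvalue_iff_isRoot_charpoly, Matrix.charpoly_toLin', charpoly_pentaK,
    root_mul]

theorem stmt15_general (a1 a2 b1 b2 c1 c2 : ℂ)
    (s1 s2 : ℂ) (hs1 : s1 ^ 2 = 2 * b1 * c1) (hs2 : s2 ^ 2 = 2 * b2 * c2) :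
    (pentaK 6 a1 a2 b1 b2 c1 c2).charpoly =
      (Polynomial.X - Polynomial.C a1) * (Polynomial.X - Polynomial.C a2) *
        ((Polynomial.X - Polynomial.C a1) ^ 2 - Polynomial.C (2 * b1 * c1)) *
        ((Polynomial.X - Polynomial.C a2) ^ 2 - Polynomial.C (2 * b2 * c2)) ∧
    Module.End.HasEigenvalue (Matrix.toLin' (pentaK 6 a1 a2 b1 b2 c1 c2)) (a1 - s1) ∧
    Module.End.HasEigenvalue (Matrix.toLin' (pentaK 6 a1 a2 b1 b2 c1 c2)) (a2 - s2) ∧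
    Module.End.HasEigenvalue (Matrix.toLin' (pentaK 6 a1 a2 b1 b2 c1 c2)) a1 ∧
    Module.End.HasEigenvalue (Matrix.toLin' (pentaK 6 a1 a2 b1 b2 c1 c2)) a2 ∧
    Module.End.HasEigenvalue (Matrix.toLin' (pentaK 6 a1 a2 b1 b2 c1 c2)) (a1 + s1) ∧
    Module.End.HasEigenvalue (Matrix.toLin' (pentaK 6 a1 a2 b1 b2 c1 c2)) (a2 + s2) := by
  refine ⟨?_, ?_, ?_, ?_, ?_, ?_, ?_⟩
  · change (pentaK (3 * 2) a1 a2 b1 b2 c1 c2).charpoly = _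
    rw [charpoly_pentaK, charpoly_tridiagToeplitz_three, charpoly_tridiagToeplitz_three]
    ring
  all_goals apply hasEigenvalue_pentaK (m := 3)
  exacts [.inl (isRoot_charpoly_tridiagToeplitz_three hs1 (.inl rfl)),
    .inr (isRoot_charpoly_tridiagToeplitz_three hs2 (.inl rfl)),
    .inl (isRoot_charpoly_tridiagToeplitz_three hs1 (.inr (.inl rfl))),
    .inr (isRoot_charpoly_tridiagToeplitz_three hs2 (.inr (.inl rfl))),
    .inl (isRoot_charpoly_tridiagToeplitz_three hs1 (.inr (.inr rfl))),
    .inr (isRoot_charpoly_tridiagToeplitz_three hs2 (.inr (.inr rfl)))]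

theorem stmt15 (a1 a2 b1 b2 c1 c2 : ℂ) (hb1 : b1 ≠ 0) (hb2 : b2 ≠ 0)
    (hc1 : c1 ≠ 0) (hc2 : c2 ≠ 0)
    (s1 s2 : ℂ) (hs1 : s1 ^ 2 = 2 * b1 * c1) (hs2 : s2 ^ 2 = 2 * b2 * c2) :
    (pentaK 6 a1 a2 b1 b2 c1 c2).charpoly =
      (Polynomial.X - Polynomial.C a1) * (Polynomial.X - Polynomial.C a2) *
        ((Polynomial.X - Polynomial.C a1) ^ 2 - Polynomial.C (2 * b1 * c1)) *
        ((Polynomial.X - Polynomial.C a2) ^ 2 - Polynomial.C (2 * b2 * c2)) ∧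
    Module.End.HasEigenvalue (Matrix.toLin' (pentaK 6 a1 a2 b1 b2 c1 c2)) (a1 - s1) ∧
    Module.End.HasEigenvalue (Matrix.toLin' (pentaK 6 a1 a2 b1 b2 c1 c2)) (a2 - s2) ∧
    Module.End.HasEigenvalue (Matrix.toLin' (pentaK 6 a1 a2 b1 b2 c1 c2)) a1 ∧
    Module.End.HasEigenvalue (Matrix.toLin' (pentaK 6 a1 a2 b1 b2 c1 c2)) a2 ∧
    Module.End.HasEigenvalue (Matrix.toLin' (pentaK 6 a1 a2 b1 b2 c1 c2)) (a1 + s1) ∧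
    Module.End.HasEigenvalue (Matrix.toLin' (pentaK 6 a1 a2 b1 b2 c1 c2)) (a2 + s2) :=
  stmt15_general a1 a2 b1 b2 c1 c2 s1 s2 hs1 hs2
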